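/- If a compact Hausdorff space X has a ccc subspace of uncountable π-weight, then X has a compact ccc subspace whose π-weight is exactly ℵ₁. -/

import Mathlib

open Set Cardinal

universe u

/-- `B` is a π-base. -/
def IsPiBase {X : Type u} [TopologicalSpace X] (B : Set (Set X)) : Prop :=
  (∀ b ∈ B, IsOpen b ∧ b.Nonempty) ∧
  ∀ U : Set X, IsOpen U → U.Nonempty → ∃ b ∈ B, b ⊆ U

/-- The π-weight of a topological space: the least cardinality of a π-base. -/
noncomputable def piWeight (X : Type u) [TopologicalSpace X] : Cardinal.{u} :=
  sInf {c : Cardinal.{u} | ∃ B : Set (Set X), IsPiBase B ∧ #B = c}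

/-- A space is ccc if every pairwise disjoint family of nonempty open sets is
countable. -/
def CCC (X : Type u) [TopologicalSpace X] : Prop :=
  ∀ 𝒰 : Set (Set X), (∀ U ∈ 𝒰, IsOpen U ∧ U.Nonempty) →
    𝒰.PairwiseDisjoint id → 𝒰.Countable

/-!
Passing to the closure of `Y`, we may assume that `X` itself is ccc with uncountable π-weight.
By transfinite recursion pick continuous `g α : X → ℝ` for `α < ω₁` such that `{g α > 0}` is
nonempty but contains no nonempty set pulled back from an open set along `(g β)_{β < α}`: if
there were no such function, these pullbacks along a countable family would yield a countable
π-base. In the image `T ⊆ ℝ^ω₁` of `x ↦ (g α x)_α`, a countable family of basic open sets only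
involves coordinates below some `α`, so none lies inside `{t | t α > 0}`; hence `T`, a ccc space
of π-weight at most `ℵ₁`, has π-weight exactly `ℵ₁`. A minimal closed subset of `X` mapping onto
`T` maps irreducibly, and an irreducible closed map `f` preserves π-weight and reflects ccc, as
`U ↦ {t | f ⁻¹' {t} ⊆ U}` carries nonempty open sets to nonempty open sets.
-/

open Topology TopologicalSpace Function

section PiWeight

variable {X Y : Type u} [TopologicalSpace X] [TopologicalSpace Y]

theorem IsPiBase.piWeight_le {B : Set (Set X)} (h : IsPiBase B) : piWeight X ≤ #B :=
  csInf_le' ⟨B, h, rfl⟩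

theorem exists_isPiBase_mk_eq_piWeight : ∃ B : Set (Set X), IsPiBase B ∧ #B = piWeight X :=
  csInf_mem (s := {c : Cardinal.{u} | ∃ B : Set (Set X), IsPiBase B ∧ #B = c})
    ⟨_, {U | IsOpen U ∧ U.Nonempty},
      ⟨fun _ hb => hb, fun U hU hne => ⟨U, ⟨hU, hne⟩, subset_rfl⟩⟩, rfl⟩

theorem aleph0_lt_piWeight_iff :
    ℵ₀ < piWeight X ↔ ∀ B : Set (Set X), IsPiBase B → ¬B.Countable := by
  refine ⟨fun h B hB hc => (hB.piWeight_le.trans (mk_le_aleph0_iff.2 hc.to_subtype)).not_gt h,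
    fun h => ?_⟩
  obtain ⟨B, hB, hcard⟩ := exists_isPiBase_mk_eq_piWeight (X := X)
  rw [← hcard, ← not_le, mk_le_aleph0_iff, countable_coe_iff]
  exact h B hB

theorem TopologicalSpace.IsTopologicalBasis.piWeight_le {𝔅 : Set (Set X)}
    (h : IsTopologicalBasis 𝔅) : piWeight X ≤ #𝔅 :=
  calc piWeight X ≤ #{b ∈ 𝔅 | b.Nonempty} :=
        IsPiBase.piWeight_le ⟨fun _ hb => ⟨h.isOpen hb.1, hb.2⟩, fun _ hU hne =>
          let ⟨v, hv, hvne, hvU⟩ := h.exists_nonempty_subset hne hU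
          ⟨v, ⟨hv, hvne⟩, hvU⟩⟩
    _ ≤ #𝔅 := mk_le_mk_of_subset (sep_subset _ _)

theorem piWeight_le_of_monotone {φ : Set Y → Set X} (hφ : Monotone φ)
    (hopen : ∀ V, IsOpen V → V.Nonempty → IsOpen (φ V) ∧ (φ V).Nonempty)
    (hcofinal : ∀ U, IsOpen U → U.Nonempty → ∃ V, IsOpen V ∧ V.Nonempty ∧ φ V ⊆ U) :
    piWeight X ≤ piWeight Y := by
  obtain ⟨P, hP, hcard⟩ := exists_isPiBase_mk_eq_piWeight (X := Y)
  have hφP : IsPiBase (φ '' P) := by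
    refine ⟨?_, fun U hU hne => ?_⟩
    · rintro _ ⟨p, hp, rfl⟩
      exact hopen p (hP.1 p hp).1 (hP.1 p hp).2
    · obtain ⟨V, hV, hVne, hVU⟩ := hcofinal U hU hne
      obtain ⟨p, hp, hpV⟩ := hP.2 V hV hVne
      exact ⟨φ p, mem_image_of_mem φ hp, (hφ hpV).trans hVU⟩
  calc piWeight X ≤ #(φ '' P) := hφP.piWeight_le
    _ ≤ #P := mk_image_le
    _ = piWeight Y := hcard

theorem IsDenseInducing.piWeight_le {f : X → Y} (hf : IsDenseInducing f) :
    piWeight X ≤ piWeight Y := by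
  refine piWeight_le_of_monotone (φ := preimage f) (fun _ _ => preimage_mono)
    (fun V hV hne => ⟨hV.preimage hf.continuous, hf.dense.exists_mem_open hV hne⟩)
    (fun U hU hne => ?_)
  obtain ⟨V, hV, rfl⟩ := hf.isInducing.isOpen_iff.1 hU
  exact ⟨V, hV, hne.image f |>.mono (image_preimage_subset f V), subset_rfl⟩

theorem Homeomorph.piWeight_eq (e : X ≃ₜ Y) : piWeight X = piWeight Y :=
  le_antisymm e.isDenseEmbedding.isDenseInducing.piWeight_le
    e.symm.isDenseEmbedding.isDenseInducing.piWeight_le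

end PiWeight

section CCC

variable {X Y : Type u} [TopologicalSpace X] [TopologicalSpace Y]

theorem CCC.of_disjoint_map {φ : Set X → Set Y} (hY : CCC Y)
    (hopen : ∀ U, IsOpen U → U.Nonempty → IsOpen (φ U) ∧ (φ U).Nonempty)
    (hdisj : ∀ U V, Disjoint U V → Disjoint (φ U) (φ V)) : CCC X := by
  intro 𝒰 h𝒰 hdisj𝒰
  have hinj : InjOn φ 𝒰 := by
    intro U hU V hV hUV
    by_contra hne
    have hself := hdisj U V (hdisj𝒰 hU hV hne)
    rw [hUV, disjoint_self, bot_eq_empty] at hself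
    exact (hopen V (h𝒰 V hV).1 (h𝒰 V hV).2).2.ne_empty hself
  refine countable_of_injective_of_countable_image hinj (hY _ ?_ ?_)
  · rintro _ ⟨U, hU, rfl⟩
    exact hopen U (h𝒰 U hU).1 (h𝒰 U hU).2
  · rintro _ ⟨U, hU, rfl⟩ _ ⟨V, hV, rfl⟩ hne
    exact hdisj U V (hdisj𝒰 hU hV (ne_of_apply_ne φ hne))

theorem CCC.of_denseRange {f : X → Y} (hX : CCC X) (hf : Continuous f) (hd : DenseRange f) :
    CCC Y :=
  hX.of_disjoint_map (φ := preimage f)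
    (fun _ hV hne => ⟨hV.preimage hf, hd.exists_mem_open hV hne⟩) fun _ _ h => h.preimage f

end CCC

section IrreducibleMap

variable {X Y : Type u} [TopologicalSpace X] {f : X → Y}

theorem kernImage_nonempty_of_irreducible
    (hirr : ∀ C : Set X, C ≠ Set.univ → IsClosed C → f '' C ≠ Set.univ) {U : Set X}
    (hU : IsOpen U) (hne : U.Nonempty) : (kernImage f U).Nonempty := by
  rw [kernImage_eq_compl, nonempty_compl]
  exact hirr _ (compl_ne_univ.2 hne) hU.isClosed_compl

variable [TopologicalSpace Y]

theorem piWeight_eq_of_irreducible (hf : Continuous f) (hsurj : Surjective f)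
    (hclosed : IsClosedMap f)
    (hirr : ∀ C : Set X, C ≠ Set.univ → IsClosed C → f '' C ≠ Set.univ) :
    piWeight X = piWeight Y :=
  le_antisymm
    (piWeight_le_of_monotone (φ := preimage f) (fun _ _ => preimage_mono)
      (fun _ hV hne => ⟨hV.preimage hf, hsurj.nonempty_preimage.2 hne⟩)
      fun U hU hne => ⟨kernImage f U, isClosedMap_iff_kernImage.1 hclosed hU,
        kernImage_nonempty_of_irreducible hirr hU hne, Set.preimage_kernImage.l_u_le U⟩)
    (piWeight_le_of_monotone kernImage_mono
      (fun U hU hne => ⟨isClosedMap_iff_kernImage.1 hclosed hU,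
        kernImage_nonempty_of_irreducible hirr hU hne⟩)
      fun V hV hne => ⟨f ⁻¹' V, hV.preimage hf, hsurj.nonempty_preimage.2 hne,
        (kernImage_preimage_eq_iff.2 (by simp [hsurj.range_eq])).le⟩)

theorem CCC.of_irreducible (hY : CCC Y) (hsurj : Surjective f) (hclosed : IsClosedMap f)
    (hirr : ∀ C : Set X, C ≠ Set.univ → IsClosed C → f '' C ≠ Set.univ) : CCC X :=
  hY.of_disjoint_map (φ := kernImage f)
    (fun U hU hne => ⟨isClosedMap_iff_kernImage.1 hclosed hU,
      kernImage_nonempty_of_irreducible hirr hU hne⟩)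
    fun U V h => by
      rw [disjoint_iff, ← Set.preimage_kernImage.u_inf, disjoint_iff.1 h, bot_eq_empty,
        kernImage_empty, hsurj.range_eq, compl_univ, bot_eq_empty]

theorem exists_isCompact_ccc_piWeight_eq [CompactSpace X] [T2Space Y] (hf : Continuous f)
    (hsurj : Surjective f) (hY : CCC Y) :
    ∃ E : Set X, IsCompact E ∧ CCC E ∧ piWeight E = piWeight Y := by
  obtain ⟨E, _, himage, hirr⟩ := exists_compact_surjective_zorn_subset hf hsurj
  have hcont : Continuous (E.domRestrict f) := hf.comp continuous_subtype_val
  have hsurjE : Surjective (E.domRestrict f) := by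
    intro y
    obtain ⟨x, hx, rfl⟩ := himage.symm ▸ mem_univ y
    exact ⟨⟨x, hx⟩, rfl⟩
  exact ⟨E, isCompact_iff_compactSpace.2 ‹_›, hY.of_irreducible hsurjE hcont.isClosedMap hirr,
    piWeight_eq_of_irreducible hcont hsurjE hcont.isClosedMap hirr⟩

end IrreducibleMap

theorem exists_forall_of_forall_exists_Iio {ι β : Type*} [Preorder ι] [WellFoundedLT ι]
    {P : (a : ι) → (Iio a → β) → β → Prop} (h : ∀ a F, ∃ b, P a F b) :
    ∃ g : ι → β, ∀ a, P a (fun b => g b) (g a) := by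
  choose next hnext using h
  let g : ι → β := wellFounded_lt.fix fun a ih => next a fun b => ih b b.2
  refine ⟨g, fun a => ?_⟩
  rw [show g a = next a fun b => g b from wellFounded_lt.fix_eq _ a]
  exact hnext _ _

theorem countable_Iio_toType_aleph_one (α : (ℵ₁ : Cardinal.{u}).ord.ToType) :
    (Iio α).Countable := by
  rw [← countable_coe_iff, ← mk_le_aleph0_iff, ← lt_aleph_one_iff]
  simpa using mk_Iio_lt α (by simp)

theorem exists_forall_lt_of_countable_toType_aleph_one {s : Set (ℵ₁ : Cardinal.{u}).ord.ToType}
    (hs : s.Countable) : ∃ α, ∀ β ∈ s, β < α := by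
  by_contra! h
  have hcof := Order.cof_le (s := s) h
  rw [Ordinal.cof_toType, isRegular_aleph_one.cof_ord] at hcof
  exact (hcof.trans (mk_le_aleph0_iff.2 hs.to_subtype)).not_gt aleph0_lt_aleph_one

theorem exists_finset_pi_subset {ι : Type*} {A : ι → Type*} [∀ i, TopologicalSpace (A i)]
    {S : Set (∀ i, A i)} {b : Set S} (hb : IsOpen b) (hne : b.Nonempty) :
    ∃ (I : Finset ι) (u : ∀ i, Set (A i)), (∀ i ∈ I, IsOpen (u i)) ∧
      (Subtype.val ⁻¹' (I : Set ι).pi u : Set S).Nonempty ∧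
      Subtype.val ⁻¹' (I : Set ι).pi u ⊆ b := by
  obtain ⟨O, hO, rfl⟩ := isOpen_induced_iff.1 hb
  obtain ⟨y, hy⟩ := hne
  obtain ⟨I, u, hu, hIO⟩ := isOpen_pi_iff.1 hO y hy
  exact ⟨I, u, fun i hi => (hu i hi).1, ⟨y, fun i hi => (hu i hi).2⟩, preimage_mono hIO⟩

theorem piWeight_subtype_le_mk {ι : Type u} [Infinite ι] (S : Set (ι → ℝ)) :
    piWeight S ≤ #ι := by
  obtain ⟨𝔅, h𝔅c, -, h𝔅⟩ := exists_countable_basis ℝ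
  let cyl : Finset (ι × 𝔅) → Set (ι → ℝ) := fun t => ⋂ p ∈ t, eval p.1 ⁻¹' p.2
  have hbasis : IsTopologicalBasis (range cyl) := by
    refine (isTopologicalBasis_pi fun _ => h𝔅).of_isOpen_of_subset ?_ ?_
    · rintro _ ⟨t, rfl⟩
      exact isOpen_biInter_finset fun p _ => (h𝔅.isOpen p.2.2).preimage (continuous_apply _)
    · classical
      rintro _ ⟨U, F, hU, rfl⟩
      refine ⟨F.attach.image fun i : F => (i.1, ⟨U i, hU i i.2⟩), ?_⟩
      ext x
      simp only [cyl, Set.pi, mem_iInter, Finset.mem_image, Finset.mem_attach, true_and]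
      exact ⟨fun h i hi => h _ ⟨⟨i, hi⟩, rfl⟩, fun h _ ⟨i, hi⟩ => hi ▸ h i i.2⟩
  have h𝔅card : #𝔅 ≤ ℵ₀ := mk_le_aleph0_iff.2 h𝔅c.to_subtype
  have : Nonempty 𝔅 :=
    let ⟨b, hb, _⟩ := h𝔅.exists_subset_of_mem_open (mem_univ (0 : ℝ)) isOpen_univ
    ⟨⟨b, hb⟩⟩
  calc piWeight S ≤ #(preimage (Subtype.val : S → ι → ℝ) '' range cyl) :=
        (isTopologicalBasis_subtype hbasis _).piWeight_le
    _ ≤ #(Finset (ι × 𝔅)) := mk_image_le.trans mk_range_le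
    _ = #ι * lift.{u} #𝔅 := by rw [mk_finset_of_infinite, mk_prod, lift_uzero]
    _ ≤ #ι * ℵ₀ := by gcongr; exact lift_le_aleph0.2 h𝔅card
    _ = #ι := mul_aleph0_eq (infinite_iff.1 ‹_›)

section Construction

variable {X : Type u} [TopologicalSpace X]

theorem exists_isOpen_forall_preimage_subset_eq_empty (hX : ℵ₀ < piWeight X) {Z : Type*}
    [TopologicalSpace Z] [SecondCountableTopology Z] {f : X → Z} (hf : Continuous f) :
    ∃ U : Set X, IsOpen U ∧ U.Nonempty ∧
      ∀ O, IsOpen O → f ⁻¹' O ⊆ U → f ⁻¹' O = ∅ := by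
  obtain ⟨𝔅, h𝔅c, -, h𝔅⟩ := exists_countable_basis Z
  by_contra! h
  refine aleph0_lt_piWeight_iff.1 hX {A | A.Nonempty ∧ ∃ b ∈ 𝔅, A = f ⁻¹' b}
    ⟨?_, ?_⟩ ((h𝔅c.image (preimage f)).mono ?_)
  · rintro _ ⟨hne, b, hb, rfl⟩
    exact ⟨(h𝔅.isOpen hb).preimage hf, hne⟩
  · intro U hU hUne
    obtain ⟨O, hO, hOU, hOne⟩ := h U hU hUne
    obtain ⟨x, hx⟩ := hOne
    obtain ⟨b, hb, hxb, hbO⟩ := h𝔅.exists_subset_of_mem_open hx hO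
    exact ⟨f ⁻¹' b, ⟨⟨x, hxb⟩, b, hb, rfl⟩, (preimage_mono hbO).trans hOU⟩
  · rintro _ ⟨-, b, hb, rfl⟩
    exact mem_image_of_mem _ hb

theorem exists_continuous_pos_subset [NormalSpace X] [T1Space X] {U : Set X} (hU : IsOpen U)
    (hne : U.Nonempty) : ∃ g : C(X, ℝ), (∃ x, 0 < g x) ∧ ∀ x, 0 < g x → x ∈ U := by
  obtain ⟨x, hx⟩ := hne
  obtain ⟨g, hg0, hg1, -⟩ := exists_continuous_zero_one_of_isClosed hU.isClosed_compl
    isClosed_singleton (disjoint_singleton_right.2 (not_not.2 hx))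
  refine ⟨g, ⟨x, by simp [hg1 rfl]⟩, fun y hy => ?_⟩
  by_contra hyU
  exact hy.ne' (hg0 hyU)

theorem exists_continuous_pos_forall_preimage_subset_eq_empty [NormalSpace X] [T1Space X]
    (hX : ℵ₀ < piWeight X) {Z : Type*} [TopologicalSpace Z] [SecondCountableTopology Z]
    {f : X → Z} (hf : Continuous f) :
    ∃ g : C(X, ℝ), (∃ x, 0 < g x) ∧
      ∀ O, IsOpen O → f ⁻¹' O ⊆ {x | 0 < g x} → f ⁻¹' O = ∅ := by
  obtain ⟨U, hU, hUne, hfree⟩ := exists_isOpen_forall_preimage_subset_eq_empty hX hf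
  obtain ⟨g, hpos, hgU⟩ := exists_continuous_pos_subset hU hUne
  exact ⟨g, hpos, fun O hO hOg => hfree O hO (hOg.trans hgU)⟩

theorem aleph0_lt_piWeight_range {g : (ℵ₁ : Cardinal.{u}).ord.ToType → C(X, ℝ)}
    (hg : ∀ α, (∃ x, 0 < g α x) ∧ ∀ O : Set (Iio α → ℝ), IsOpen O →
      (fun x (β : Iio α) => g β x) ⁻¹' O ⊆ {x | 0 < g α x} →
        (fun x (β : Iio α) => g β x) ⁻¹' O = ∅) :
    ℵ₀ < piWeight (range fun x i => g i x) := by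
  set f : X → (ℵ₁ : Cardinal.{u}).ord.ToType → ℝ := fun x i => g i x
  rw [aleph0_lt_piWeight_iff]
  intro B hB hBc
  choose! I u hu hne hsub using fun b hb =>
    exists_finset_pi_subset (hB.1 b hb).1 (hB.1 b hb).2
  obtain ⟨α, hα⟩ := exists_forall_lt_of_countable_toType_aleph_one
    (hBc.biUnion fun b _ => (I b).countable_toSet)
  obtain ⟨⟨x₀, hx₀⟩, hfree⟩ := hg α
  let W : Set (range f) := {y | 0 < y.1 α}
  have hW : IsOpen W :=
    isOpen_lt continuous_const ((continuous_apply α).comp continuous_subtype_val)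
  obtain ⟨b, hb, hbW⟩ := hB.2 W hW ⟨⟨f x₀, mem_range_self x₀⟩, hx₀⟩
  -- the cylinder `(I b).pi (u b)` only involves coordinates below `α`
  let O : Set (Iio α → ℝ) := (Subtype.val ⁻¹' (I b : Set _)).pi fun β => u b β
  have hO : IsOpen O := isOpen_set_pi ((I b).finite_toSet.preimage Subtype.val_injective.injOn)
    fun β hβ => hu b hb β hβ
  have hpre : (fun x (β : Iio α) => g β x) ⁻¹' O = f ⁻¹' (I b : Set _).pi (u b) := by
    ext x
    exact ⟨fun h i hi => h ⟨i, hα i (mem_biUnion hb hi)⟩ hi, fun h β hβ => h β hβ⟩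
  have hpos : f ⁻¹' (I b : Set _).pi (u b) ⊆ {x | 0 < g α x} := fun y hy =>
    hbW (hsub b hb (show (⟨f y, mem_range_self y⟩ : range f) ∈ _ from hy))
  obtain ⟨⟨_, x, rfl⟩, hx⟩ := hne b hb
  exact (hfree O hO (hpre ▸ hpos)).subset (hpre ▸ hx : x ∈ _)

theorem exists_continuous_aleph0_lt_piWeight_range [NormalSpace X] [T1Space X]
    (hX : ℵ₀ < piWeight X) :
    ∃ f : X → ((ℵ₁ : Cardinal.{u}).ord.ToType → ℝ),
      Continuous f ∧ ℵ₀ < piWeight (range f) := by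
  obtain ⟨g, hg⟩ := exists_forall_of_forall_exists_Iio fun α (F : Iio α → C(X, ℝ)) =>
    have := (countable_Iio_toType_aleph_one α).to_subtype
    exists_continuous_pos_forall_preimage_subset_eq_empty hX
      (continuous_pi fun β => (F β).continuous)
  exact ⟨_, continuous_pi fun i => (g i).continuous, aleph0_lt_piWeight_range hg⟩

end Construction

theorem exists_isCompact_ccc_piWeight_eq_aleph_one {X : Type u} [TopologicalSpace X]
    [CompactSpace X] [T2Space X] (hX : CCC X) (hpi : ℵ₀ < piWeight X) :
    ∃ E : Set X, IsCompact E ∧ CCC E ∧ piWeight E = ℵ₁ := by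
  obtain ⟨f, hf, hT⟩ := exists_continuous_aleph0_lt_piWeight_range hpi
  obtain ⟨E, hE, hEccc, hEpi⟩ := exists_isCompact_ccc_piWeight_eq hf.rangeFactorization
    rangeFactorization_surjective
    (hX.of_denseRange hf.rangeFactorization rangeFactorization_surjective.denseRange)
  have : Infinite (ℵ₁ : Cardinal.{u}).ord.ToType := by
    rw [infinite_iff, mk_ord_toType]
    exact aleph0_lt_aleph_one.le
  refine ⟨E, hE, hEccc, hEpi.trans (le_antisymm ?_ (aleph_one_le_iff.2 hT))⟩
  simpa using piWeight_subtype_le_mk (range f)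

theorem exists_compact_ccc_subspace_piWeight_aleph_one {X : Type u}
    [TopologicalSpace X] [CompactSpace X] [T2Space X]
    (Y : Set X) (hYccc : CCC Y) (hYpi : Cardinal.aleph 0 < piWeight Y) :
    ∃ Z : Set X, IsCompact Z ∧ CCC Z ∧ piWeight Z = Cardinal.aleph 1 := by
  rw [aleph_zero] at hYpi
  have hdense : IsDenseInducing (inclusion (subset_closure : Y ⊆ closure Y)) :=
    ⟨(IsEmbedding.inclusion _).isInducing, (denseRange_inclusion_iff _).2 subset_rfl⟩
  have : CompactSpace (closure Y) := isCompact_iff_compactSpace.1 isClosed_closure.isCompact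
  obtain ⟨E, hE, hEccc, hEpi⟩ := exists_isCompact_ccc_piWeight_eq_aleph_one
    (hYccc.of_denseRange hdense.continuous hdense.dense) (hYpi.trans_le hdense.piWeight_le)
  have : CompactSpace E := isCompact_iff_compactSpace.1 hE
  have hemb : IsEmbedding fun x : E => (x : X) :=
    IsEmbedding.subtypeVal.comp IsEmbedding.subtypeVal
  let e := hemb.toHomeomorph
  exact ⟨_, isCompact_range hemb.continuous, hEccc.of_denseRange e.continuous
    e.surjective.denseRange, e.piWeight_eq.symm.trans hEpi⟩
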